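/- Assume the learning tuple satisfies the expected (η, c)-central condition for some η > 0 and 0 < c ≤ 1, i.e. log E_{P_W ⊗ μ}[exp(−η r(W', Z'))] ≤ −c η E_{P_W ⊗ μ}[r(W', Z')]. Then for every η' ∈ (0, η], the expected excess risk satisfies E[ℛ(W)] ≤ (1/c) · E[ℛ̂(W, Sₙ)] + (1/(c η' n)) Σ_{i=1}^n I(W; Zᵢ). -/

import Mathlib

/-!
By the Donsker–Varadhan inequality, for each `i`,
`E[-η r(W, Zᵢ)] ≤ D(P_{W,Zᵢ} ‖ P_W ⊗ μ) + log E_{P_W ⊗ μ}[exp (-η r)]`,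
and the central condition bounds the logarithm by `-c η E_{P_W ⊗ μ}[r] = -c η E[ℛ(W)]`.
Averaging over `i` gives the bound with `η`, and since the divergences are nonnegative it
persists for every `η' ≤ η`. Integrability of each `r(W, Zᵢ)` comes from the same duality in its
pointwise (Young) form `x y ≤ y log y - y + exp x`, which makes the negative parts integrable;
the positive parts are then controlled by the integrable empirical risk.
-/

open MeasureTheory ProbabilityTheory

/-- Real-valued Kullback–Leibler divergence `D(P‖Q) = ∫ log (dP/dQ) dP`. -/
noncomputable def klDivR {α : Type*} [MeasurableSpace α] (P Q : Measure α) : ℝ :=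
  ∫ x, llr P Q x ∂P

open Real

lemma mul_le_mul_log_sub_add_exp (x : ℝ) {y : ℝ} (hy : 0 ≤ y) :
    x * y ≤ y * log y - y + exp x := by
  rcases hy.eq_or_lt with rfl | hy
  · simpa using (exp_pos x).le
  · have h := add_one_le_exp (x - log y)
    rw [exp_sub, exp_log hy, le_div_iff₀ hy] at h
    linarith

lemma exp_posPart_le (x : ℝ) : exp x⁺ ≤ exp x + 1 := by
  rw [posPart_def, exp_monotone.map_max, exp_zero]
  exact max_le (by linarith) (by linarith [exp_pos x])

section KullbackLeibler

variable {α : Type*} [MeasurableSpace α] {P Q : Measure α}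

lemma klDivR_nonneg [IsProbabilityMeasure P] [IsProbabilityMeasure Q] (hPQ : P ≪ Q) :
    0 ≤ klDivR P Q := by
  rw [klDivR, ← InformationTheory.toReal_klDiv_of_measure_eq hPQ (by simp)]
  exact ENNReal.toReal_nonneg

/-- The Donsker–Varadhan inequality. -/
lemma integral_le_klDivR_add_log_integral_exp [IsProbabilityMeasure P] [IsProbabilityMeasure Q]
    (hPQ : P ≪ Q) (hllr : Integrable (llr P Q) P) {f : α → ℝ} (hfP : Integrable f P)
    (hfQ : Integrable (fun x => exp (f x)) Q) :
    ∫ x, f x ∂P ≤ klDivR P Q + log (∫ x, exp (f x) ∂Q) := by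
  have := isProbabilityMeasure_tilted hfQ
  have h := klDivR_nonneg (hPQ.trans (absolutelyContinuous_tilted hfQ))
  rw [klDivR, integral_llr_tilted_right hPQ hfP hfQ hllr] at h
  rw [klDivR]
  linarith

lemma integrable_posPart_of_integrable_exp [IsFiniteMeasure P] [IsFiniteMeasure Q]
    (hPQ : P ≪ Q) (hllr : Integrable (llr P Q) P) {f : α → ℝ}
    (hfQ : Integrable (fun x => exp (f x)) Q) : Integrable (fun x => (f x)⁺) P := by
  have hf : AEMeasurable f Q := by
    simpa [Function.comp_def] using measurable_log.comp_aemeasurable hfQ.aemeasurable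
  rw [← integrable_rnDeriv_smul_iff hPQ]
  -- Young's inequality `x y ≤ y log y - y + exp x` with `y = dP/dQ`
  refine Integrable.mono' (g := fun x => (P.rnDeriv Q x).toReal * log (P.rnDeriv Q x).toReal
      - (P.rnDeriv Q x).toReal + (exp (f x) + 1))
    ((((integrable_rnDeriv_mul_log_iff hPQ).2 hllr).sub
      Measure.integrable_toReal_rnDeriv).add (hfQ.add (integrable_const 1)))
    ((Measure.measurable_rnDeriv P Q).ennreal_toReal.aestronglyMeasurable.smul
      (hf.max aemeasurable_const).aestronglyMeasurable) (ae_of_all _ fun x => ?_)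
  rw [norm_smul, norm_of_nonneg ENNReal.toReal_nonneg, norm_of_nonneg (posPart_nonneg _),
    mul_comm]
  exact (mul_le_mul_log_sub_add_exp _ ENNReal.toReal_nonneg).trans
    (add_le_add_right (exp_posPart_le _) _)

lemma integrable_negPart_of_integrable_exp_neg_mul [IsFiniteMeasure P] [IsFiniteMeasure Q]
    (hPQ : P ≪ Q) (hllr : Integrable (llr P Q) P) {g : α → ℝ} {η : ℝ} (hη : 0 < η)
    (hexp : Integrable (fun x => exp (-η * g x)) Q) : Integrable (fun x => (g x)⁻) P := by
  refine ((integrable_posPart_of_integrable_exp hPQ hllr hexp).const_mul η⁻¹).congr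
    (ae_of_all _ fun x => ?_)
  simp only [posPart_def, negPart_def]
  rw [mul_max_of_nonneg _ _ (inv_nonneg.2 hη.le), mul_zero, neg_mul, mul_neg,
    inv_mul_cancel_left₀ hη.ne']

def CentralCondition (Q : Measure α) (g : α → ℝ) (η c : ℝ) : Prop :=
  log (∫ x, exp (-η * g x) ∂Q) ≤ -c * η * ∫ x, g x ∂Q

lemma CentralCondition.mul_integral_le_klDivR_add [IsProbabilityMeasure P]
    [IsProbabilityMeasure Q] {g : α → ℝ} {η c : ℝ}
    (h : CentralCondition Q g η c) (hPQ : P ≪ Q) (hllr : Integrable (llr P Q) P)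
    (hgP : Integrable g P) (hexp : Integrable (fun x => exp (-η * g x)) Q) :
    c * η * ∫ x, g x ∂Q ≤ klDivR P Q + η * ∫ x, g x ∂P := by
  have hdv := integral_le_klDivR_add_log_integral_exp hPQ hllr (hgP.const_mul (-η)) hexp
  rw [integral_const_mul] at hdv
  unfold CentralCondition at h
  linarith

end KullbackLeibler

lemma abs_le_abs_sum_add_sum_negPart {ι : Type*} [Fintype ι] (a : ι → ℝ) (i : ι) :
    |a i| ≤ |∑ j, a j| + ∑ j, (a j)⁻ := by
  have hpos : a i + (a i)⁻ ≤ ∑ j, (a j + (a j)⁻) :=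
    Finset.single_le_sum (f := fun j => a j + (a j)⁻)
      (fun j _ => by linarith [posPart_sub_negPart (a j), posPart_nonneg (a j)])
      (Finset.mem_univ i)
  have hneg : (a i)⁻ ≤ ∑ j, (a j)⁻ :=
    Finset.single_le_sum (fun j _ => negPart_nonneg (a j)) (Finset.mem_univ i)
  rw [Finset.sum_add_distrib] at hpos
  rw [abs_le]
  constructor <;> linarith [neg_le_negPart (a i), negPart_nonneg (a i),
    le_abs_self (∑ j, a j), neg_abs_le (∑ j, a j)]

lemma integrable_of_integrable_sum_of_integrable_negPart {α ι : Type*} [MeasurableSpace α]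
    [Fintype ι] {μ : Measure α} {g : ι → α → ℝ} (hsum : Integrable (fun x => ∑ i, g i x) μ)
    (hneg : ∀ i, Integrable (fun x => (g i x)⁻) μ) (hmeas : ∀ i, AEStronglyMeasurable (g i) μ)
    (i : ι) : Integrable (g i) μ :=
  (hsum.abs.add (integrable_finsetSum _ fun j _ => hneg j)).mono' (hmeas i)
    (ae_of_all _ fun x => abs_le_abs_sum_add_sum_negPart (g · x) i)

lemma integral_prod_map_eq_integral_integral {Ω α β : Type*} [MeasurableSpace Ω]
    [MeasurableSpace α] [MeasurableSpace β] {P : Measure Ω} [IsFiniteMeasure P] {X : Ω → α}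
    (hX : AEMeasurable X P) {ν : Measure β} [SFinite ν] {f : α × β → ℝ}
    (hf : Integrable f ((P.map X).prod ν)) :
    ∫ p, f p ∂((P.map X).prod ν) = ∫ ω, ∫ y, f (X ω, y) ∂ν ∂P := by
  rw [integral_prod f hf, integral_map hX hf.1.integral_prod_right']

lemma le_inv_mul_sum_add_of_forall_mul_le {n : ℕ} (hn : 0 < n) {c η η' E : ℝ} {K t : Fin n → ℝ}
    (hc : 0 < c) (hη' : 0 < η') (hη'η : η' ≤ η) (hK : ∀ i, 0 ≤ K i)
    (h : ∀ i, c * η * E ≤ K i + η * t i) :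
    E ≤ 1 / c * ((n : ℝ)⁻¹ * ∑ i, t i) + 1 / (c * η' * n) * ∑ i, K i := by
  have hsum : n * (c * η * E) ≤ ∑ i, K i + η * ∑ i, t i := by
    have := Finset.sum_le_sum (s := Finset.univ) fun i _ => h i
    simpa [Finset.sum_add_distrib, Finset.mul_sum] using this
  have hKsum : 0 ≤ ∑ i, K i := Finset.sum_nonneg fun i _ => hK i
  have hη : 0 < η := hη'.trans_le hη'η
  have hnR : (0 : ℝ) < n := Nat.cast_pos.2 hn
  calc E ≤ 1 / c * ((n : ℝ)⁻¹ * ∑ i, t i) + 1 / (c * η * n) * ∑ i, K i := by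
        field_simp
        linarith
    _ ≤ _ := by gcongr

theorem eta_c_central_excess_risk_bound_general
    {Ω 𝒲 𝒵 : Type*} [MeasurableSpace Ω] [MeasurableSpace 𝒲] [MeasurableSpace 𝒵]
    (P : Measure Ω) [IsProbabilityMeasure P]
    (μ : Measure 𝒵) [IsProbabilityMeasure μ]
    (n : ℕ) (hn : 0 < n)
    (Z : Fin n → Ω → 𝒵) (hZmeas : ∀ i, Measurable (Z i))
    (W : Ω → 𝒲) (hW : Measurable W)
    (r : 𝒲 → 𝒵 → ℝ)
    (η c : ℝ) (hη : 0 < η) (hc : 0 < c)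
    -- all expectations appearing are finite
    (hrInt : Integrable (fun p : 𝒲 × 𝒵 => r p.1 p.2) ((P.map W).prod μ))
    (hexpInt : ∀ η' : ℝ, 0 < η' → η' ≤ η →
      Integrable (fun p : 𝒲 × 𝒵 => Real.exp (-η' * r p.1 p.2)) ((P.map W).prod μ))
    (hEmpInt : Integrable (fun ω => (n : ℝ)⁻¹ * ∑ i, r (W ω) (Z i ω)) P)
    (hac : ∀ i, P.map (fun ω => (W ω, Z i ω)) ≪ (P.map W).prod μ)
    (hllr : ∀ i, Integrable (llr (P.map (fun ω => (W ω, Z i ω))) ((P.map W).prod μ))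
        (P.map (fun ω => (W ω, Z i ω))))
    -- expected `(η, c)`-central condition
    (hcentral : Real.log (∫ p, Real.exp (-η * r p.1 p.2) ∂((P.map W).prod μ))
      ≤ -c * η * ∫ p, r p.1 p.2 ∂((P.map W).prod μ)) :
    ∀ η' : ℝ, 0 < η' → η' ≤ η →
    ∫ ω, (∫ z, r (W ω) z ∂μ) ∂P
      ≤ (1 / c) * (∫ ω, (n : ℝ)⁻¹ * ∑ i, r (W ω) (Z i ω) ∂P)
        + (1 / (c * η' * n)) * ∑ i,
            klDivR (P.map (fun ω => (W ω, Z i ω))) ((P.map W).prod μ) := by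
  intro η' hη' hη'η
  have := Measure.isProbabilityMeasure_map (μ := P) hW.aemeasurable
  have hpair i : AEMeasurable (fun ω => (W ω, Z i ω)) P := (hW.prodMk (hZmeas i)).aemeasurable
  have hrmeas i := hrInt.aestronglyMeasurable.mono_ac (hac i)
  have hexp := hexpInt η hη le_rfl
  have hneg i : Integrable (fun ω => (r (W ω) (Z i ω))⁻) P :=
    (integrable_negPart_of_integrable_exp_neg_mul (hac i) (hllr i) hη hexp).comp_aemeasurable
      (hpair i)
  have hsum : Integrable (fun ω => ∑ i, r (W ω) (Z i ω)) P := by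
    simpa [hn.ne'] using hEmpInt.const_mul n
  have hrint := integrable_of_integrable_sum_of_integrable_negPart hsum hneg
    fun i => (hrmeas i).comp_aemeasurable (hpair i)
  have hkey i : c * η * ∫ p, r p.1 p.2 ∂((P.map W).prod μ)
      ≤ klDivR (P.map (fun ω => (W ω, Z i ω))) ((P.map W).prod μ)
        + η * ∫ ω, r (W ω) (Z i ω) ∂P := by
    have := Measure.isProbabilityMeasure_map (hpair i)
    rw [← integral_map (hpair i) (hrmeas i)]
    exact (show CentralCondition _ _ η c from hcentral).mul_integral_le_klDivR_add
      (hac i) (hllr i) ((integrable_map_measure (hrmeas i) (hpair i)).2 (hrint i)) hexp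
  rw [← integral_prod_map_eq_integral_integral hW.aemeasurable hrInt, integral_const_mul,
    integral_finsetSum _ fun i _ => hrint i]
  refine le_inv_mul_sum_add_of_forall_mul_le hn hc hη' hη'η (fun i => ?_) hkey
  have := Measure.isProbabilityMeasure_map (hpair i)
  exact klDivR_nonneg (hac i)

/-- **Theorem 4 (fast rate with the `(η, c)`-central condition, excess risk).** -/
theorem eta_c_central_excess_risk_bound
    {Ω 𝒲 𝒵 : Type*} [MeasurableSpace Ω] [MeasurableSpace 𝒲] [MeasurableSpace 𝒵]
    (P : Measure Ω) [IsProbabilityMeasure P]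
    (μ : Measure 𝒵) [IsProbabilityMeasure μ]
    (ℓ : 𝒲 → 𝒵 → ℝ) (hℓ : Measurable (Function.uncurry ℓ))
    (n : ℕ) (hn : 0 < n)
    (Z : Fin n → Ω → 𝒵) (hZmeas : ∀ i, Measurable (Z i))
    (hZlaw : ∀ i, P.map (Z i) = μ)
    (hindep : iIndepFun Z P)
    (W : Ω → 𝒲) (hW : Measurable W)
    (wstar : 𝒲) (hwstar : ∀ w, ∫ z, ℓ wstar z ∂μ ≤ ∫ z, ℓ w z ∂μ)
    (r : 𝒲 → 𝒵 → ℝ) (hr : r = fun w z => ℓ w z - ℓ wstar z)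
    (η c : ℝ) (hη : 0 < η) (hc : 0 < c) (hc1 : c ≤ 1)
    -- all expectations appearing are finite
    (hrInt : Integrable (fun p : 𝒲 × 𝒵 => r p.1 p.2) ((P.map W).prod μ))
    (hexpInt : ∀ η' : ℝ, 0 < η' → η' ≤ η →
      Integrable (fun p : 𝒲 × 𝒵 => Real.exp (-η' * r p.1 p.2)) ((P.map W).prod μ))
    (hRiskInt : Integrable (fun ω => ∫ z, r (W ω) z ∂μ) P)
    (hEmpInt : Integrable (fun ω => (n : ℝ)⁻¹ * ∑ i, r (W ω) (Z i ω)) P)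
    (hac : ∀ i, P.map (fun ω => (W ω, Z i ω)) ≪ (P.map W).prod μ)
    (hllr : ∀ i, Integrable (llr (P.map (fun ω => (W ω, Z i ω))) ((P.map W).prod μ))
        (P.map (fun ω => (W ω, Z i ω))))
    -- expected `(η, c)`-central condition
    (hcentral : Real.log (∫ p, Real.exp (-η * r p.1 p.2) ∂((P.map W).prod μ))
      ≤ -c * η * ∫ p, r p.1 p.2 ∂((P.map W).prod μ)) :
    ∀ η' : ℝ, 0 < η' → η' ≤ η →
    ∫ ω, (∫ z, r (W ω) z ∂μ) ∂P
      ≤ (1 / c) * (∫ ω, (n : ℝ)⁻¹ * ∑ i, r (W ω) (Z i ω) ∂P)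
        + (1 / (c * η' * n)) * ∑ i,
            klDivR (P.map (fun ω => (W ω, Z i ω))) ((P.map W).prod μ) :=
  eta_c_central_excess_risk_bound_general P μ n hn Z hZmeas W hW r η c hη hc hrInt hexpInt hEmpInt
    hac hllr hcentral
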